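/- Let a ≥ 0 and let x, y : ℕ → ℝ satisfy 0 ≤ x_m ≤ a^m and 0 ≤ y_n ≤ a^n for all m, n ∈ ℕ. Then Σ_{ℓ,ℓ′=0}^{∞} (1/(ℓ! ℓ′!)) Σ ((m̃+ñ)!/((m−ℓ)! n! (m̃−ℓ′)! ñ!)) x_{m−1} y_n ≤ 8 e^{16a}, where the inner sum runs over all (m, n, m̃, ñ) ∈ ℕ⁴ with m ≥ max(ℓ,1), m̃ ≥ ℓ′ and m + n = m̃ + ñ (in particular the whole family is summable). -/
import Mathlib


/-- The summand of Lemma D.6, shifted-index case: for a sextuple `(ℓ, ℓ', m, n, m̃, ñ)`,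
`(1/(ℓ! ℓ'!)) * ((m̃+ñ)! / ((m-ℓ)! n! (m̃-ℓ')! ñ!)) * x (m-1) * y n`. -/
noncomputable def summandD6shift (x y : ℕ → ℝ) : ℕ × ℕ × ℕ × ℕ × ℕ × ℕ → ℝ :=
  fun (l, l', m, n, mt, nt) =>
    1 / ((l.factorial : ℝ) * (l'.factorial : ℝ)) *
      (((mt + nt).factorial : ℝ) /
        (((m - l).factorial : ℝ) * (n.factorial : ℝ) * ((mt - l').factorial : ℝ) *
          (nt.factorial : ℝ))) * x (m - 1) * y n

/-- Index condition: `m ≥ max(ℓ,1)`, `ℓ' ≤ m̃` and `m + n = m̃ + ñ`. -/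
def condD6shift : ℕ × ℕ × ℕ × ℕ × ℕ × ℕ → Prop :=
  fun (l, l', m, n, mt, nt) => l ≤ m ∧ 1 ≤ m ∧ l' ≤ mt ∧ m + n = mt + nt

namespace D6aux

/-- Majorant: `C(m+n, m) C(m, l) C(m+n, m̃) C(m̃, ℓ') a^(m+n-1) / (m+n)!`. -/
noncomputable def gmaj (a : ℝ) : ℕ × ℕ × ℕ × ℕ × ℕ × ℕ → ℝ :=
  fun (l, l', m, n, mt, nt) =>
    (((m + n).choose m * m.choose l * (m + n).choose mt * mt.choose l' : ℕ) : ℝ) *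
      a ^ (m + n - 1) / ((m + n).factorial : ℝ)

lemma gmaj_nonneg (a : ℝ) (ha : 0 ≤ a) (q : ℕ × ℕ × ℕ × ℕ × ℕ × ℕ) : 0 ≤ gmaj a q := by
  obtain ⟨l, l', m, n, mt, nt⟩ := q
  simp only [gmaj]
  positivity

lemma summand_nonneg (x y : ℕ → ℝ) (hx0 : ∀ m, 0 ≤ x m) (hy0 : ∀ n, 0 ≤ y n)
    (q : ℕ × ℕ × ℕ × ℕ × ℕ × ℕ) : 0 ≤ summandD6shift x y q := by
  obtain ⟨l, l', m, n, mt, nt⟩ := q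
  simp only [summandD6shift]
  have h1 : (0:ℝ) ≤ 1 / ((l.factorial : ℝ) * (l'.factorial : ℝ)) := by positivity
  have h2 : (0:ℝ) ≤ (((mt + nt).factorial : ℝ) /
      (((m - l).factorial : ℝ) * (n.factorial : ℝ) * ((mt - l').factorial : ℝ) *
        (nt.factorial : ℝ))) := by positivity
  exact mul_nonneg (mul_nonneg (mul_nonneg h1 h2) (hx0 _)) (hy0 _)

lemma summand_le_gmaj (a : ℝ) (ha : 0 ≤ a) (x y : ℕ → ℝ)
    (hx0 : ∀ m, 0 ≤ x m) (hxa : ∀ m, x m ≤ a ^ m)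
    (hy0 : ∀ n, 0 ≤ y n) (hya : ∀ n, y n ≤ a ^ n)
    (q : ℕ × ℕ × ℕ × ℕ × ℕ × ℕ) (hq : condD6shift q) :
    summandD6shift x y q ≤ gmaj a q := by
  obtain ⟨l, l', m, n, mt, nt⟩ := q
  obtain ⟨hl, hm, hl', hN⟩ := hq
  have hmN : m ≤ m + n := Nat.le_add_right m n
  have hmtN : mt ≤ m + n := by omega
  have h1 : (m + n).choose m * m.factorial * n.factorial = (m + n).factorial := by
    have := Nat.choose_mul_factorial_mul_factorial hmN
    rwa [show m + n - m = n by omega] at this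
  have h2 : m.choose l * l.factorial * (m - l).factorial = m.factorial :=
    Nat.choose_mul_factorial_mul_factorial hl
  have h3 : (m + n).choose mt * mt.factorial * nt.factorial = (m + n).factorial := by
    have := Nat.choose_mul_factorial_mul_factorial hmtN
    rwa [show m + n - mt = nt by omega] at this
  have h4 : mt.choose l' * l'.factorial * (mt - l').factorial = mt.factorial :=
    Nat.choose_mul_factorial_mul_factorial hl'
  have step : ((m + n).choose m * m.factorial * n.factorial) *
      ((m + n).choose mt * mt.factorial * nt.factorial) =
      (m + n).factorial * (m + n).factorial := by rw [h1, h3]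
  have hprod : ((m + n).choose m * m.choose l * (m + n).choose mt * mt.choose l') *
      (l.factorial * l'.factorial *
        ((m - l).factorial * n.factorial * (mt - l').factorial * nt.factorial)) =
      (m + n).factorial * (m + n).factorial := by
    rw [← step, ← h2, ← h4]; ring
  have hprodR : (((m + n).choose m * m.choose l * (m + n).choose mt * mt.choose l' : ℕ) : ℝ) *
      ((l.factorial : ℝ) * (l'.factorial : ℝ) *
        (((m - l).factorial : ℝ) * (n.factorial : ℝ) * ((mt - l').factorial : ℝ) *
          (nt.factorial : ℝ))) =
      ((m + n).factorial : ℝ) * ((m + n).factorial : ℝ) := by exact_mod_cast hprod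
  -- the coefficient identity
  have key : 1 / ((l.factorial : ℝ) * (l'.factorial : ℝ)) *
      (((mt + nt).factorial : ℝ) /
        (((m - l).factorial : ℝ) * (n.factorial : ℝ) * ((mt - l').factorial : ℝ) *
          (nt.factorial : ℝ))) =
      (((m + n).choose m * m.choose l * (m + n).choose mt * mt.choose l' : ℕ) : ℝ) /
        ((m + n).factorial : ℝ) := by
    rw [← hN]
    have e0 : ((m + n).factorial : ℝ) ≠ 0 := by positivity
    have e1 : (l.factorial : ℝ) ≠ 0 := by positivity
    have e2 : (l'.factorial : ℝ) ≠ 0 := by positivity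
    have e3 : ((m - l).factorial : ℝ) ≠ 0 := by positivity
    have e4 : (n.factorial : ℝ) ≠ 0 := by positivity
    have e5 : ((mt - l').factorial : ℝ) ≠ 0 := by positivity
    have e6 : (nt.factorial : ℝ) ≠ 0 := by positivity
    field_simp
    push_cast at hprodR ⊢
    linear_combination -hprodR
  simp only [summandD6shift, gmaj]
  have main : ∀ C : ℝ, 0 ≤ C → C * x (m - 1) * y n ≤ C * (a ^ (m - 1) * a ^ n) := by
    intro C hC
    have hx : x (m - 1) ≤ a ^ (m - 1) := hxa _
    have hy : y n ≤ a ^ n := hya _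
    have step1 : C * x (m - 1) * y n ≤ C * a ^ (m - 1) * y n := by
      apply mul_le_mul_of_nonneg_right _ (hy0 n)
      exact mul_le_mul_of_nonneg_left hx hC
    refine step1.trans ?_
    rw [mul_assoc]
    exact mul_le_mul_of_nonneg_left (mul_le_mul_of_nonneg_left hy (by positivity)) hC
  have hpow : a ^ (m - 1) * a ^ n = a ^ (m + n - 1) := by
    rw [← pow_add]
    congr 1
    omega
  refine le_trans (main _ (by positivity)) ?_
  rw [hpow, key]
  exact le_of_eq (by ring)

/-- Parametrization of the fiber `m+n = N`. -/
def phiD (N : ℕ) : (ℕ × ℕ) × ℕ × ℕ → ℕ × ℕ × ℕ × ℕ × ℕ × ℕ :=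
  fun p => (p.1.2, p.2.2, p.1.1 + 1, N - (p.1.1 + 1), p.2.1, N - p.2.1)

/-- Source index set for the fiber. -/
def srcD (N : ℕ) : Finset ((ℕ × ℕ) × ℕ × ℕ) :=
  (Finset.range N ×ˢ Finset.range (N + 1)) ×ˢ (Finset.range (N + 1) ×ˢ Finset.range (N + 1))

/-- The fiber set. -/
def Dn (N : ℕ) : Finset (ℕ × ℕ × ℕ × ℕ × ℕ × ℕ) := (srcD N).image (phiD N)

lemma phiD_inj (N : ℕ) : Function.Injective (phiD N) := by
  intro p q h
  simp only [phiD, Prod.mk.injEq] at h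
  obtain ⟨h1, h2, h3, -, h5, -⟩ := h
  ext <;> omega

lemma mem_Dn (q : ℕ × ℕ × ℕ × ℕ × ℕ × ℕ) (hq : condD6shift q) :
    q ∈ Dn (q.2.2.1 + q.2.2.2.1) := by
  obtain ⟨l, l', m, n, mt, nt⟩ := q
  obtain ⟨hl, hm, hl', hN⟩ := hq
  simp only [Dn, Finset.mem_image]
  refine ⟨((m - 1, l), (mt, l')), ?_, ?_⟩
  · simp only [srcD, Finset.mem_product, Finset.mem_range]
    omega
  · simp only [phiD, Prod.mk.injEq]
    and_intros <;> first | trivial | omega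

lemma nof_mem_Dn {N : ℕ} {q : ℕ × ℕ × ℕ × ℕ × ℕ × ℕ} (hq : q ∈ Dn N) :
    q.2.2.1 + q.2.2.2.1 = N := by
  simp only [Dn, Finset.mem_image] at hq
  obtain ⟨p, hp, rfl⟩ := hq
  simp only [srcD, Finset.mem_product, Finset.mem_range] at hp
  simp only [phiD]
  omega

lemma sum_choose_range (m N : ℕ) (h : m ≤ N) :
    ∑ l ∈ Finset.range (N + 1), m.choose l = 2 ^ m := by
  rw [← Nat.sum_range_choose m]
  refine (Finset.sum_subset ?_ ?_).symm
  · exact Finset.range_subset_range.mpr (by omega)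
  · intro l _ hl
    simp only [Finset.mem_range] at hl
    exact Nat.choose_eq_zero_of_lt (by omega)

lemma sum_choose_two_pow (N : ℕ) :
    ∑ k ∈ Finset.range (N + 1), N.choose k * 2 ^ k = 3 ^ N := by
  have h := add_pow 2 1 N (R := ℕ)
  simp only [one_pow, mul_one] at h
  norm_num at h
  rw [h]
  exact Finset.sum_congr rfl fun k _ => by ring

lemma sum_Dn (a : ℝ) (N : ℕ) :
    ∑ q ∈ Dn N, gmaj a q =
      ((3 : ℝ) ^ N - 1) * 3 ^ N * a ^ (N - 1) / (N.factorial : ℝ) := by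
  rw [Dn, Finset.sum_image (fun p _ q _ h => phiD_inj N h)]
  have hcongr : ∑ p ∈ srcD N, gmaj a (phiD N p) =
      ∑ p ∈ srcD N, ((N.choose (p.1.1 + 1) * (p.1.1 + 1).choose p.1.2 : ℕ) : ℝ) *
        (((N.choose p.2.1 * p.2.1.choose p.2.2 : ℕ) : ℝ) *
          (a ^ (N - 1) / (N.factorial : ℝ))) := by
    refine Finset.sum_congr rfl fun p hp => ?_
    simp only [srcD, Finset.mem_product, Finset.mem_range] at hp
    obtain ⟨⟨hi, -⟩, hmt, -⟩ := hp
    simp only [gmaj, phiD]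
    rw [show p.1.1 + 1 + (N - (p.1.1 + 1)) = N by omega]
    push_cast
    ring
  rw [hcongr]
  have hsrc : srcD N =
      (Finset.range N ×ˢ Finset.range (N + 1)) ×ˢ
        (Finset.range (N + 1) ×ˢ Finset.range (N + 1)) := rfl
  rw [hsrc, Finset.sum_product]
  -- separate the two factors
  have hfact : ∀ p1 ∈ Finset.range N ×ˢ Finset.range (N + 1),
      ∑ p2 ∈ Finset.range (N + 1) ×ˢ Finset.range (N + 1),
        ((N.choose (p1.1 + 1) * (p1.1 + 1).choose p1.2 : ℕ) : ℝ) *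
          (((N.choose p2.1 * p2.1.choose p2.2 : ℕ) : ℝ) * (a ^ (N - 1) / (N.factorial : ℝ))) =
      ((N.choose (p1.1 + 1) * (p1.1 + 1).choose p1.2 : ℕ) : ℝ) *
        (((3:ℝ) ^ N) * (a ^ (N - 1) / (N.factorial : ℝ))) := by
    intro p1 _
    rw [← Finset.mul_sum]
    congr 1
    rw [← Finset.sum_mul]
    congr 1
    have : ∑ p2 ∈ Finset.range (N + 1) ×ˢ Finset.range (N + 1),
        ((N.choose p2.1 * p2.1.choose p2.2 : ℕ) : ℝ) =
        ((∑ p2 ∈ Finset.range (N + 1) ×ˢ Finset.range (N + 1),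
          N.choose p2.1 * p2.1.choose p2.2 : ℕ) : ℝ) := by push_cast; rfl
    rw [this]
    have : ∑ p2 ∈ Finset.range (N + 1) ×ˢ Finset.range (N + 1),
        N.choose p2.1 * p2.1.choose p2.2 = 3 ^ N := by
      rw [Finset.sum_product]
      have : ∀ mt ∈ Finset.range (N + 1),
          ∑ l' ∈ Finset.range (N + 1), N.choose mt * mt.choose l' =
            N.choose mt * 2 ^ mt := by
        intro mt hmt
        simp only [Finset.mem_range] at hmt
        rw [← Finset.mul_sum, sum_choose_range mt N (by omega)]
      rw [Finset.sum_congr rfl this, sum_choose_two_pow]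
    rw [this]
    push_cast
    ring
  rw [Finset.sum_congr rfl hfact]
  -- now the first factor
  have hS1 : ∑ p1 ∈ Finset.range N ×ˢ Finset.range (N + 1),
      ((N.choose (p1.1 + 1) * (p1.1 + 1).choose p1.2 : ℕ) : ℝ) = (3:ℝ) ^ N - 1 := by
    have hnat : (∑ p1 ∈ Finset.range N ×ˢ Finset.range (N + 1),
        N.choose (p1.1 + 1) * (p1.1 + 1).choose p1.2) + 1 = 3 ^ N := by
      rw [Finset.sum_product]
      have : ∀ i ∈ Finset.range N,
          ∑ l ∈ Finset.range (N + 1), N.choose (i + 1) * (i + 1).choose l =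
            N.choose (i + 1) * 2 ^ (i + 1) := by
        intro i hi
        simp only [Finset.mem_range] at hi
        rw [← Finset.mul_sum, sum_choose_range (i + 1) N (by omega)]
      rw [Finset.sum_congr rfl this]
      have h3 := sum_choose_two_pow N
      rw [Finset.sum_range_succ'] at h3
      simpa using h3
    have hR : ((∑ p1 ∈ Finset.range N ×ˢ Finset.range (N + 1),
        N.choose (p1.1 + 1) * (p1.1 + 1).choose p1.2 : ℕ) : ℝ) + 1 = (3:ℝ) ^ N := by
      exact_mod_cast hnat
    rw [← Nat.cast_sum]
    linarith
  rw [← Finset.sum_mul, hS1]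
  ring

lemma fib_bound (a : ℝ) (ha : 0 ≤ a) (k : ℕ) :
    ((3 : ℝ) ^ (k + 1) - 1) * 3 ^ (k + 1) * a ^ k / ((k + 1).factorial : ℝ) ≤
      6 * (9 * a) ^ k / (k.factorial : ℝ) := by
  have hfk : (0:ℝ) < (k.factorial : ℝ) := by positivity
  have hfk1 : ((k + 1).factorial : ℝ) = (k + 1) * (k.factorial : ℝ) := by
    rw [Nat.factorial_succ]; push_cast; ring
  have hcoef : ((3 : ℝ) ^ (k + 1) - 1) * 3 ^ (k + 1) ≤ 6 * (k + 1) * 9 ^ k := by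
    have h99 : ((3:ℝ) ^ (k + 1)) * (3 ^ (k + 1)) = 9 * 9 ^ k := by
      rw [← mul_pow]; norm_num; rw [pow_succ]; ring
    have h39 : (3:ℝ) ^ (k+1) ≤ 3 * 9 ^ k := by
      rw [pow_succ]
      have : (3:ℝ) ^ k ≤ 9 ^ k := pow_le_pow_left₀ (by norm_num) (by norm_num) k
      nlinarith
    have h3 : (3:ℝ) ≤ 3 ^ (k + 1) := by
      calc (3:ℝ) = 3 ^ 1 := by norm_num
        _ ≤ 3 ^ (k + 1) := pow_le_pow_right₀ (by norm_num) (by omega)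
    rcases Nat.eq_zero_or_pos k with rfl | hk
    · norm_num
    · have hk1 : (1:ℝ) ≤ (k:ℝ) := by exact_mod_cast hk
      have h9pos : (0:ℝ) < 9 ^ k := by positivity
      nlinarith
  rw [div_le_div_iff₀ (by positivity) hfk]
  have hpow : (9 * a) ^ k = 9 ^ k * a ^ k := mul_pow 9 a k
  rw [hpow, hfk1]
  have hak : (0:ℝ) ≤ a ^ k := by positivity
  calc ((3 : ℝ) ^ (k + 1) - 1) * 3 ^ (k + 1) * a ^ k * (k.factorial : ℝ)
      ≤ 6 * ((k:ℝ) + 1) * 9 ^ k * a ^ k * (k.factorial : ℝ) := by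
        apply mul_le_mul_of_nonneg_right _ hfk.le
        exact mul_le_mul_of_nonneg_right hcoef hak
    _ = 6 * (9 ^ k * a ^ k) * (((k:ℝ) + 1) * (k.factorial : ℝ)) := by ring

lemma key_finset (a : ℝ) (ha : 0 ≤ a) (x y : ℕ → ℝ)
    (hx0 : ∀ m, 0 ≤ x m) (hxa : ∀ m, x m ≤ a ^ m)
    (hy0 : ∀ n, 0 ≤ y n) (hya : ∀ n, y n ≤ a ^ n)
    (u : Finset {q : ℕ × ℕ × ℕ × ℕ × ℕ × ℕ // condD6shift q}) :
    ∑ q ∈ u, summandD6shift x y q.1 ≤ 6 * Real.exp (9 * a) := by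
  classical
  set t := u.image (fun q => q.1) with ht_def
  have hsum_eq : ∑ q ∈ t, summandD6shift x y q =
      ∑ q ∈ u, summandD6shift x y q.1 := by
    rw [ht_def]
    exact Finset.sum_image fun p _ q _ h => Subtype.ext h
  rw [← hsum_eq]
  have ht : ∀ q ∈ t, condD6shift q := by
    intro q hq
    rw [ht_def] at hq
    obtain ⟨⟨q', hq'⟩, -, rfl⟩ := Finset.mem_image.mp hq
    exact hq'
  set S := t.sup fun q => q.2.2.1 + q.2.2.2.1 with hS_def
  have hsub : t ⊆ (Finset.range (S + 1)).biUnion Dn := by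
    intro q hq
    refine Finset.mem_biUnion.mpr ⟨q.2.2.1 + q.2.2.2.1, ?_, mem_Dn q (ht q hq)⟩
    refine Finset.mem_range.mpr ?_
    have : q.2.2.1 + q.2.2.2.1 ≤ S := by
      rw [hS_def]
      exact Finset.le_sup (f := fun q : ℕ × ℕ × ℕ × ℕ × ℕ × ℕ => q.2.2.1 + q.2.2.2.1) hq
    omega
  have hdisj : ((Finset.range (S + 1) : Finset ℕ) : Set ℕ).PairwiseDisjoint Dn := by
    intro N1 _ N2 _ hne
    refine Finset.disjoint_left.mpr fun q h1 h2 => ?_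
    exact hne ((nof_mem_Dn h1).symm.trans (nof_mem_Dn h2))
  calc ∑ q ∈ t, summandD6shift x y q
      ≤ ∑ q ∈ t, gmaj a q :=
        Finset.sum_le_sum fun q hq => summand_le_gmaj a ha x y hx0 hxa hy0 hya q (ht q hq)
    _ ≤ ∑ q ∈ (Finset.range (S + 1)).biUnion Dn, gmaj a q :=
        Finset.sum_le_sum_of_subset_of_nonneg hsub fun q _ _ => gmaj_nonneg a ha q
    _ = ∑ N ∈ Finset.range (S + 1), ∑ q ∈ Dn N, gmaj a q := Finset.sum_biUnion hdisj
    _ = ∑ N ∈ Finset.range (S + 1),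
          ((3 : ℝ) ^ N - 1) * 3 ^ N * a ^ (N - 1) / (N.factorial : ℝ) :=
        Finset.sum_congr rfl fun N _ => sum_Dn a N
    _ ≤ 6 * Real.exp (9 * a) := by
        rw [Finset.sum_range_succ']
        have h0 : ((3 : ℝ) ^ 0 - 1) * 3 ^ 0 * a ^ (0 - 1) / ((0:ℕ).factorial : ℝ) = 0 := by
          norm_num
        rw [h0, add_zero]
        calc ∑ i ∈ Finset.range S,
              ((3 : ℝ) ^ (i + 1) - 1) * 3 ^ (i + 1) * a ^ (i + 1 - 1) / ((i + 1).factorial : ℝ)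
            ≤ ∑ i ∈ Finset.range S, 6 * (9 * a) ^ i / (i.factorial : ℝ) := by
              refine Finset.sum_le_sum fun i _ => ?_
              have := fib_bound a ha i
              simpa using this
          _ = 6 * ∑ i ∈ Finset.range S, (9 * a) ^ i / (i.factorial : ℝ) := by
              rw [Finset.mul_sum]
              exact Finset.sum_congr rfl fun i _ => by ring
          _ ≤ 6 * Real.exp (9 * a) := by
              have := Real.sum_le_exp_of_nonneg (by positivity : (0:ℝ) ≤ 9 * a) S
              linarith

end D6aux

/-- Lemma D.6 ('summation-ell'), shifted-index case: if `0 ≤ x m ≤ a^m` and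
`0 ≤ y n ≤ a^n`, then
`∑_{ℓ,ℓ'} (1/(ℓ! ℓ'!)) ∑ ((m̃+ñ)!/((m-ℓ)! n! (m̃-ℓ')! ñ!)) x_{m-1} y_n ≤ 8 e^{16a}`,
the inner sum over `(m, n, m̃, ñ)` with `m ≥ max(ℓ,1)`, `m̃ ≥ ℓ'` and `m + n = m̃ + ñ`. -/
theorem summation_ell_lemma_shift (a : ℝ) (ha : 0 ≤ a) (x y : ℕ → ℝ)
    (hx0 : ∀ m, 0 ≤ x m) (hxa : ∀ m, x m ≤ a ^ m)
    (hy0 : ∀ n, 0 ≤ y n) (hya : ∀ n, y n ≤ a ^ n) :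
    Summable (fun q : {q : ℕ × ℕ × ℕ × ℕ × ℕ × ℕ // condD6shift q} =>
      summandD6shift x y q.1) ∧
    ∑' q : {q : ℕ × ℕ × ℕ × ℕ × ℕ × ℕ // condD6shift q},
      summandD6shift x y q.1 ≤ 8 * Real.exp (16 * a) := by
  have hb := D6aux.key_finset a ha x y hx0 hxa hy0 hya
  have hnn : ∀ q : {q : ℕ × ℕ × ℕ × ℕ × ℕ × ℕ // condD6shift q},
      0 ≤ summandD6shift x y q.1 := fun q => D6aux.summand_nonneg x y hx0 hy0 q.1
  have hsummable : Summable (fun q : {q : ℕ × ℕ × ℕ × ℕ × ℕ × ℕ // condD6shift q} =>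
      summandD6shift x y q.1) := summable_of_sum_le hnn hb
  refine ⟨hsummable, ?_⟩
  have h1 : ∑' q : {q : ℕ × ℕ × ℕ × ℕ × ℕ × ℕ // condD6shift q},
      summandD6shift x y q.1 ≤ 6 * Real.exp (9 * a) :=
    Summable.tsum_le_of_sum_le hsummable hb
  refine h1.trans ?_
  have h2 : Real.exp (9 * a) ≤ Real.exp (16 * a) := Real.exp_le_exp.mpr (by nlinarith)
  nlinarith [Real.exp_pos (9 * a), Real.exp_pos (16 * a)]
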